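/- arXiv:2310.09555 — 2 statements merged into one kernel-verified Lean document; each statement's English description precedes it below -/
import Mathlib

section
/- Let N, k, n_ALLC be integers with 2 ≤ k ≤ N-1 and 0 < n_ALLC < N, and let α, β, c be reals with c = 1. In a population of n_ALLC unconditional cooperators and N - n_ALLC unconditional defectors, where a cooperator's expected payoff is π_C = α k^{β-1}((n_ALLC - 1)(k-1)/(N-1) + 1) - 1 and a defector's expected payoff is π_D = α k^{β-1}(n_ALLC (k-1)/(N-1)), the equality π_D = π_C holds if and only if α = (N-1)/(k^{β-1}(N-k)). In particular this critical value is independent of n_ALLC. -/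
theorem critical_alpha_iff (N k nALLC : ℕ) (hk : 2 ≤ k) (hkN : k ≤ N - 1)
    (hn0 : 0 < nALLC) (hnN : nALLC < N) (α β c : ℝ) (hc : c = 1) :
    (α * (k : ℝ) ^ (β - 1) * ((nALLC : ℝ) * ((k : ℝ) - 1) / ((N : ℝ) - 1))
      = α * (k : ℝ) ^ (β - 1)
          * (((nALLC : ℝ) - 1) * ((k : ℝ) - 1) / ((N : ℝ) - 1) + 1) - 1)
      ↔ α = ((N : ℝ) - 1) / ((k : ℝ) ^ (β - 1) * ((N : ℝ) - (k : ℝ))) := by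
  have hkN' : k + 1 ≤ N := by omega
  have hNk : (k : ℝ) + 1 ≤ (N : ℝ) := by exact_mod_cast hkN'
  have hk2 : (2 : ℝ) ≤ (k : ℝ) := by exact_mod_cast hk
  have hK : (0 : ℝ) < (k : ℝ) ^ (β - 1) := Real.rpow_pos_of_pos (by linarith) _
  have hK' : (k : ℝ) ^ (β - 1) ≠ 0 := ne_of_gt hK
  have hN1 : (N : ℝ) - 1 ≠ 0 := by linarith
  have hNk' : (N : ℝ) - (k : ℝ) ≠ 0 := by linarith
  rw [eq_div_iff (mul_ne_zero hK' hNk')]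
  constructor
  · intro h
    field_simp at h
    nlinarith [h]
  · intro h
    field_simp
    nlinarith [h]
end

section
/- In the two-strategy population with compositions given above, defectors strictly outperform cooperators (π_ALLD > π_ALLC) for all 0 < n_ALLC < N if and only if α < (N-1)/(k^{β-1}(N-k)), assuming k < N. -/
theorem defectors_dominate_iff (N k : ℕ) (hk : 2 ≤ k) (hkN : k < N)
    (α β : ℝ) (hα : 0 < α) :
    (∀ nALLC : ℕ, 0 < nALLC → nALLC < N →
        α * (k : ℝ) ^ (β - 1)
            * (((nALLC : ℝ) - 1) * ((k : ℝ) - 1) / ((N : ℝ) - 1) + 1) - 1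
          < α * (k : ℝ) ^ (β - 1) * ((nALLC : ℝ) * ((k : ℝ) - 1) / ((N : ℝ) - 1)))
      ↔ α < ((N : ℝ) - 1) / ((k : ℝ) ^ (β - 1) * ((N : ℝ) - (k : ℝ))) := by
  have hkR : (2:ℝ) ≤ (k:ℝ) := by exact_mod_cast hk
  have hkNR : (k:ℝ) < (N:ℝ) := by exact_mod_cast hkN
  have hN1 : (0:ℝ) < (N:ℝ) - 1 := by linarith
  have hNk : (0:ℝ) < (N:ℝ) - (k:ℝ) := by linarith
  have hK : (0:ℝ) < (k : ℝ) ^ (β - 1) := by positivity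
  have hinv : (0:ℝ) < ((N:ℝ)-1)⁻¹ := by positivity
  have hmul : ((N:ℝ)-1) * ((N:ℝ)-1)⁻¹ = 1 := mul_inv_cancel₀ hN1.ne'
  have h3 : α * (k:ℝ)^(β-1) * (((N:ℝ)-1) * ((N:ℝ)-1)⁻¹) = α * (k:ℝ)^(β-1) := by
    rw [hmul, mul_one]
  constructor
  · intro h
    have h1 := h 1 one_pos (by omega)
    push_cast at h1
    rw [lt_div_iff₀ (by positivity)]
    simp only [div_eq_mul_inv] at h1
    nlinarith [mul_lt_mul_of_pos_right h1 hN1, h3, hmul]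
  · intro h n hn hnN
    rw [lt_div_iff₀ (by positivity)] at h
    have hn1 : (1:ℝ) ≤ (n:ℝ) := by exact_mod_cast hn
    simp only [div_eq_mul_inv]
    nlinarith [mul_lt_mul_of_pos_right h hinv, h3, hmul]
end
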